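/- (Terminating very-well-poised 6W5 summation) Let n be a nonnegative integer and let q, a, b, c be complex numbers with q ≠ 0, q not a root of unity, a ≠ 1, b ≠ 0, c ≠ 0, and such that aq/b ≠ q^{-j}, aq/c ≠ q^{-j} for 0 ≤ j < n, and a q^{n+1} ≠ q^{-j} for 0 ≤ j < n, and (c;q)-type denominators nonzero, i.e. all factors (q;q)_k, (aq/b;q)_k, (aq/c;q)_k, (aq^{n+1};q)_k for 0 ≤ k ≤ n are nonzero. Then ∑_{k=0}^n [(1 - a q^{2k})/(1 - a)] · [(a;q)_k (b;q)_k (c;q)_k (q^{-n};q)_k / ((q;q)_k (aq/b;q)_k (aq/c;q)_k (a q^{n+1};q)_k)] (a q^{n+1}/(bc))^k = (aq;q)_n (aq/(bc);q)_n / ((aq/b;q)_n (aq/c;q)_n). -/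

import Mathlib

/-- The finite q-shifted factorial `(a;q)_k = ∏_{j=0}^{k-1} (1 - a q^j)`. -/
noncomputable def qPoch (a q : ℂ) (k : ℕ) : ℂ := ∏ j ∈ Finset.range k, (1 - a * q ^ j)

open Finset

/-- cleared term -/
noncomputable def tt (q a b c : ℂ) (n k : ℕ) : ℂ :=
  (1 - a*q^(2*k)) * qPoch a q k * qPoch b q k * qPoch c q k *
  (∏ j ∈ range k, (q^n - q^j)) * (a*q)^k *
  (∏ j ∈ Ico k n, (1 - q^(j+1))) * (∏ j ∈ Ico k n, (b - a*q^(j+1))) *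
  (∏ j ∈ Ico k n, (c - a*q^(j+1))) * (∏ j ∈ Ico k n, (1 - a*q^(n+1+j)))

/-- cleared WZ certificate -/
noncomputable def gg (q a b c : ℂ) (n k : ℕ) : ℂ :=
  qPoch a q k * qPoch b q k * qPoch c q k *
  (∏ j ∈ range k, (q^(n+1) - q^j)) * a^k * q^(n+1) *
  (∏ j ∈ Ico k (n+1), (1 - q^j)) * (∏ j ∈ Ico k (n+1), (b - a*q^j)) *
  (∏ j ∈ Ico k (n+1), (c - a*q^j)) * (∏ j ∈ Ico k (n+1), (1 - a*q^(n+1+j)))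

/-- cleared right-hand side -/
noncomputable def rrhs (q a b c : ℂ) (n : ℕ) : ℂ :=
  (1-a) * qPoch q q n * qPoch (a*q) q n * (∏ j ∈ range n, (b*c - a*q^(j+1))) *
  (∏ j ∈ range n, (1 - a*q^(n+1+j)))

lemma qPoch_succ (a q : ℂ) (k : ℕ) : qPoch a q (k+1) = qPoch a q k * (1 - a*q^k) :=
  Finset.prod_range_succ _ _

lemma prod_Ico_shift (f : ℕ → ℂ) (k n : ℕ) :
    ∏ i ∈ Ico (k+1) (n+1), f i = ∏ i ∈ Ico k n, f (i+1) := by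
  rw [Finset.prod_Ico_eq_prod_range, Finset.prod_Ico_eq_prod_range]
  simp only [Nat.succ_sub_succ]
  exact Finset.prod_congr rfl fun i _ => by ring_nf

/-- L1 : the q-shifted factorial comparison lemma -/
lemma L1 (q : ℂ) (n k : ℕ) :
    (1 - q^(n+1)) * q^k * ∏ j ∈ range k, (q^n - q^j)
      = (q^k - q^(n+1)) * ∏ j ∈ range k, (q^(n+1) - q^j) := by
  induction k with
  | zero => simp
  | succ k ih =>
    rw [Finset.prod_range_succ, Finset.prod_range_succ]
    linear_combination (q * (q^n - q^k)) * ih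

/-- L2 : relation between the two tail products -/
lemma L2 (q a : ℂ) {n k : ℕ} (hk : k ≤ n) :
    (∏ j ∈ Ico k n, (1 - a*q^(n+1+j))) * (1 - a*q^(2*n+1))
      = (1 - a*q^(n+1+k)) * ∏ j ∈ Ico (k+1) (n+1), (1 - a*q^(n+1+j)) := by
  have h2 := Finset.prod_eq_prod_Ico_succ_bot (Nat.lt_succ_of_le hk) (fun j => (1 - a*q^(n+1+j)))
  rw [← h2, Finset.prod_Ico_succ_top hk]
  ring

theorem key (q a b c : ℂ) (n k : ℕ) (hk : k ≤ n+1) :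
    tt q a b c (n+1) k
      = (b*c - a*q^(n+1))*(1-q^(n+1))*(1-a*q^(2*n+1))*(1-a*q^(2*n+2)) * tt q a b c n k
        - (1-a*q^(2*n+2)) * (gg q a b c n (k+1) - gg q a b c n k) := by
  rcases Nat.lt_succ_iff_lt_or_eq.mp (Nat.lt_succ_of_le hk) with hk2 | hk2
  · -- k ≤ n
    have hkn : k ≤ n := Nat.lt_succ_iff.mp hk2
    simp only [tt, gg]
    -- decompose tt(n+1) products
    have e1 : ∏ j ∈ Ico k (n+1), (1 - q^(j+1))
        = (∏ j ∈ Ico k n, (1 - q^(j+1))) * (1 - q^(n+1)) :=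
      Finset.prod_Ico_succ_top hkn _
    have e2 : ∏ j ∈ Ico k (n+1), (b - a*q^(j+1))
        = (∏ j ∈ Ico k n, (b - a*q^(j+1))) * (b - a*q^(n+1)) :=
      Finset.prod_Ico_succ_top hkn _
    have e3 : ∏ j ∈ Ico k (n+1), (c - a*q^(j+1))
        = (∏ j ∈ Ico k n, (c - a*q^(j+1))) * (c - a*q^(n+1)) :=
      Finset.prod_Ico_succ_top hkn _
    have e4 : ∏ j ∈ Ico k (n+1), (1 - a*q^(n+1+1+j))
        = (∏ j ∈ Ico (k+1) (n+1), (1 - a*q^(n+1+j))) * (1 - a*q^(2*n+2)) := by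
      have s1 : ∏ j ∈ Ico k (n+1), (1 - a*q^(n+1+1+j))
          = ∏ j ∈ Ico (k+1) (n+1+1), (1 - a*q^(n+1+j)) := by
        rw [prod_Ico_shift (fun j => 1 - a*q^(n+1+j)) k (n+1)]
        exact Finset.prod_congr rfl fun j _ => by ring_nf
      rw [s1, Finset.prod_Ico_succ_top (Nat.succ_le_succ hkn)]
      have hexp : n+1+(n+1) = 2*n+2 := by omega
      rw [hexp]
    -- decompose gg n k products
    have f1 : ∏ j ∈ Ico k (n+1), (1 - q^j)
        = (1 - q^k) * ∏ j ∈ Ico k n, (1 - q^(j+1)) := by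
      rw [Finset.prod_eq_prod_Ico_succ_bot (Nat.lt_succ_of_le hkn),
        prod_Ico_shift (fun j => 1 - q^j) k n]
    have f2 : ∏ j ∈ Ico k (n+1), (b - a*q^j)
        = (b - a*q^k) * ∏ j ∈ Ico k n, (b - a*q^(j+1)) := by
      rw [Finset.prod_eq_prod_Ico_succ_bot (Nat.lt_succ_of_le hkn),
        prod_Ico_shift (fun j => b - a*q^j) k n]
    have f3 : ∏ j ∈ Ico k (n+1), (c - a*q^j)
        = (c - a*q^k) * ∏ j ∈ Ico k n, (c - a*q^(j+1)) := by
      rw [Finset.prod_eq_prod_Ico_succ_bot (Nat.lt_succ_of_le hkn),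
        prod_Ico_shift (fun j => c - a*q^j) k n]
    have f4 : ∏ j ∈ Ico k (n+1), (1 - a*q^(n+1+j))
        = (1 - a*q^(n+1+k)) * ∏ j ∈ Ico (k+1) (n+1), (1 - a*q^(n+1+j)) :=
      Finset.prod_eq_prod_Ico_succ_bot (Nat.lt_succ_of_le hkn) _
    -- decompose gg n (k+1) products
    have g1 : ∏ j ∈ Ico (k+1) (n+1), (1 - q^j)
        = ∏ j ∈ Ico k n, (1 - q^(j+1)) := prod_Ico_shift _ k n
    have g2 : ∏ j ∈ Ico (k+1) (n+1), (b - a*q^j)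
        = ∏ j ∈ Ico k n, (b - a*q^(j+1)) := prod_Ico_shift _ k n
    have g3 : ∏ j ∈ Ico (k+1) (n+1), (c - a*q^j)
        = ∏ j ∈ Ico k n, (c - a*q^(j+1)) := prod_Ico_shift _ k n
    rw [e1, e2, e3, e4, f1, f2, f3, f4, g1, g2, g3, qPoch_succ a, qPoch_succ b, qPoch_succ c,
      Finset.prod_range_succ, pow_succ a k]
    set A := qPoch a q k
    set B := qPoch b q k
    set C := qPoch c q k
    set En := ∏ j ∈ range k, (q^n - q^j) with hEn
    set En1 := ∏ j ∈ range k, (q^(n+1) - q^j) with hEn1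
    set Uq := ∏ j ∈ Ico k n, (1 - q^(j+1))
    set Ub := ∏ j ∈ Ico k n, (b - a*q^(j+1))
    set Uc := ∏ j ∈ Ico k n, (c - a*q^(j+1))
    set UA := ∏ j ∈ Ico k n, (1 - a*q^(n+1+j)) with hUA
    set WA := ∏ j ∈ Ico (k+1) (n+1), (1 - a*q^(n+1+j)) with hWA
    have l1 := L1 q n k
    have l2 := L2 q a hkn
    rw [← hEn, ← hEn1] at l1
    rw [← hUA, ← hWA] at l2
    set Kc := (b*c - a*q^(n+1))*(1-a*q^(2*n+2))*(1-a*q^(2*k))*A*B*C*a^k*Uq*Ub*Uc with hKc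
    linear_combination (-(Kc*((1-a*q^(2*n+1))*UA))) * l1
      + (-(Kc*((q^k-q^(n+1))*En1))) * l2
  · -- k = n+1
    subst hk2
    have ht0 : tt q a b c n (n+1) = 0 := by
      have : (∏ j ∈ range (n+1), (q^n - q^j)) = 0 :=
        Finset.prod_eq_zero (Finset.self_mem_range_succ n) (by ring)
      simp [tt, this]
    have hg0 : gg q a b c n (n+1+1) = 0 := by
      have : (∏ j ∈ range (n+1+1), (q^(n+1) - q^j)) = 0 :=
        Finset.prod_eq_zero (by simp : n+1 ∈ range (n+1+1)) (by ring)
      simp [gg, this]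
    rw [ht0, hg0]
    simp only [tt, gg, Finset.Ico_self, Finset.prod_empty]
    ring

theorem ggzero (q a b c : ℂ) (n : ℕ) : gg q a b c n 0 = 0 := by
  have h2 : (∏ j ∈ Ico 0 (n+1), (1 - q^j)) = 0 :=
    Finset.prod_eq_zero (by simp : (0:ℕ) ∈ Ico 0 (n+1)) (by simp)
  simp only [gg]
  rw [h2]
  ring

theorem sumStep (q a b c : ℂ) (n : ℕ) :
    ∑ k ∈ range (n+2), tt q a b c (n+1) k
      = (b*c - a*q^(n+1))*(1-q^(n+1))*(1-a*q^(2*n+1))*(1-a*q^(2*n+2))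
        * ∑ k ∈ range (n+1), tt q a b c n k := by
  have hcong : ∀ k ∈ range (n+2), tt q a b c (n+1) k
      = (b*c - a*q^(n+1))*(1-q^(n+1))*(1-a*q^(2*n+1))*(1-a*q^(2*n+2)) * tt q a b c n k
        - (1-a*q^(2*n+2)) * (gg q a b c n (k+1) - gg q a b c n k) :=
    fun k hk => key q a b c n k (Nat.lt_succ_iff.mp (Finset.mem_range.mp hk))
  rw [Finset.sum_congr rfl hcong, Finset.sum_sub_distrib, ← Finset.mul_sum, ← Finset.mul_sum,
    Finset.sum_range_sub (fun k => gg q a b c n k)]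
  have hg2 : gg q a b c n (n+2) = 0 := by
    have : (∏ j ∈ range (n+2), (q^(n+1) - q^j)) = 0 :=
      Finset.prod_eq_zero (by simp : n+1 ∈ range (n+2)) (by ring)
    simp [gg, this]
  have ht0 : tt q a b c n (n+1) = 0 := by
    have : (∏ j ∈ range (n+1), (q^n - q^j)) = 0 :=
      Finset.prod_eq_zero (Finset.self_mem_range_succ n) (by ring)
    simp [tt, this]
  rw [hg2, ggzero, Finset.sum_range_succ, ht0]
  ring

theorem L3 (q a : ℂ) (n : ℕ) :
    (1 - a*q^(n+1)) * ∏ j ∈ range (n+1), (1 - a*q^(n+1+1+j))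
      = (∏ j ∈ range n, (1 - a*q^(n+1+j))) * (1 - a*q^(2*n+1)) * (1 - a*q^(2*n+2)) := by
  have h1 : ∏ j ∈ range (n+2), (1 - a*q^(n+1+j))
      = (1 - a*q^(n+1)) * ∏ j ∈ range (n+1), (1 - a*q^(n+1+1+j)) := by
    rw [Finset.prod_range_succ']
    have : ∀ j ∈ range (n+1), (1 - a*q^(n+1+(j+1))) = (1 - a*q^(n+1+1+j)) := by
      intro j _; ring_nf
    rw [Finset.prod_congr rfl this]
    simp [mul_comm]
  have h2 : ∏ j ∈ range (n+2), (1 - a*q^(n+1+j))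
      = (∏ j ∈ range n, (1 - a*q^(n+1+j))) * (1 - a*q^(2*n+1)) * (1 - a*q^(2*n+2)) := by
    rw [Finset.prod_range_succ, Finset.prod_range_succ]
    have ha1 : n+1+n = 2*n+1 := by omega
    have ha2 : n+1+(n+1) = 2*n+2 := by omega
    rw [ha1, ha2]
  rw [← h1, h2]

theorem cleared (q a b c : ℂ) (n : ℕ) :
    ∑ k ∈ range (n+1), tt q a b c n k = rrhs q a b c n := by
  induction n with
  | zero => simp [tt, rrhs, qPoch]
  | succ n ih =>
    rw [sumStep, ih]
    simp only [rrhs]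
    rw [qPoch_succ q, qPoch_succ (a*q), Finset.prod_range_succ (fun j => b*c - a*q^(j+1))]
    have l3 := L3 q a n
    linear_combination (-((1-a) * qPoch q q n * qPoch (a*q) q n
      * (∏ j ∈ range n, (b*c - a*q^(j+1))) * (1-q*q^n) * (b*c-a*q^(n+1)))) * l3

lemma qPoch_split (x q : ℂ) (k d : ℕ) :
    qPoch x q (k+d) = qPoch x q k * ∏ j ∈ Ico k (k+d), (1 - x*q^j) := by
  rw [qPoch, qPoch, Finset.range_eq_Ico, Finset.range_eq_Ico]
  exact (Finset.prod_Ico_consecutive (fun j => 1 - x*q^j) (Nat.zero_le k) (Nat.le_add_right k d)).symm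

lemma mulDivHelper (x1 x2 x3 x4 x5 x6 : ℂ) (h3 : x3 ≠ 0) (h5 : x5 ≠ 0) :
    x1 * (x2/x3) * (x4/x5) * x6 = x1*x2*x4*x6/(x3*x5) := by
  field_simp

lemma claim (q a b c : ℂ) (k d : ℕ) (hq0 : q ≠ 0) (hb : b ≠ 0) (hc : c ≠ 0)
    (hQ : qPoch q q k ≠ 0) (hB : qPoch (a*q/b) q k ≠ 0) (hC : qPoch (a*q/c) q k ≠ 0)
    (hA : qPoch (a*q^(k+d+1)) q k ≠ 0) :
    (1 - a * q ^ (2 * k)) *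
        (qPoch a q k * qPoch b q k * qPoch c q k * qPoch (q ^ (-((k+d : ℕ) : ℤ))) q k /
          (qPoch q q k * qPoch (a * q / b) q k * qPoch (a * q / c) q k *
            qPoch (a * q ^ ((k+d) + 1)) q k)) * (a * q ^ ((k+d) + 1) / (b * c)) ^ k
      * (qPoch q q (k+d) * qPoch (a*q/b) q (k+d) * qPoch (a*q/c) q (k+d)
          * qPoch (a*q^((k+d)+1)) q (k+d) * (b*c)^(k+d))
    = tt q a b c (k+d) k := by
  have hqn : (q:ℂ)^(k+d) ≠ 0 := pow_ne_zero _ hq0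
  rw [qPoch_split q q k d, qPoch_split (a*q/b) q k d, qPoch_split (a*q/c) q k d,
    qPoch_split (a*q^((k+d)+1)) q k d]
  have En_eq : ∏ j ∈ range k, (q^(k+d) - q^j)
      = (q^(k+d))^k * qPoch (q ^ (-((k+d : ℕ) : ℤ))) q k := by
    have hc1 : (q^(k+d))^k = ∏ _j ∈ range k, q^(k+d) := by
      rw [Finset.prod_const, Finset.card_range]
    rw [qPoch, hc1, ← Finset.prod_mul_distrib]
    refine Finset.prod_congr rfl fun j _ => ?_
    have hz : q ^ (-((k+d : ℕ) : ℤ)) = (q^(k+d))⁻¹ := by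
      rw [zpow_neg, zpow_natCast]
    rw [hz]
    field_simp
  have Pm_eq : qPoch (q ^ (-((k+d : ℕ) : ℤ))) q k
      = (∏ j ∈ range k, (q^(k+d) - q^j)) / (q^(k+d))^k := by
    rw [eq_div_iff (pow_ne_zero k hqn), En_eq]; ring
  have cQ : ∏ j ∈ Ico k (k+d), (1 - q^(j+1)) = ∏ j ∈ Ico k (k+d), (1 - q*q^j) :=
    Finset.prod_congr rfl fun j _ => by rw [pow_succ]; ring
  have cB : ∏ j ∈ Ico k (k+d), (b - a*q^(j+1))
      = b^d * ∏ j ∈ Ico k (k+d), (1 - (a*q/b)*q^j) := by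
    have e1 : ∏ j ∈ Ico k (k+d), (b - a*q^(j+1))
        = ∏ j ∈ Ico k (k+d), (b * (1 - (a*q/b)*q^j)) :=
      Finset.prod_congr rfl fun j _ => by field_simp; rw [pow_succ]; ring
    rw [e1, Finset.prod_mul_distrib, Finset.prod_const, Nat.card_Ico]
    simp
  have cC : ∏ j ∈ Ico k (k+d), (c - a*q^(j+1))
      = c^d * ∏ j ∈ Ico k (k+d), (1 - (a*q/c)*q^j) := by
    have e1 : ∏ j ∈ Ico k (k+d), (c - a*q^(j+1))
        = ∏ j ∈ Ico k (k+d), (c * (1 - (a*q/c)*q^j)) :=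
      Finset.prod_congr rfl fun j _ => by field_simp; rw [pow_succ]; ring
    rw [e1, Finset.prod_mul_distrib, Finset.prod_const, Nat.card_Ico]
    simp
  have cA : ∏ j ∈ Ico k (k+d), (1 - a*q^((k+d)+1+j))
      = ∏ j ∈ Ico k (k+d), (1 - (a*q^((k+d)+1))*q^j) :=
    Finset.prod_congr rfl fun j _ => by rw [pow_add]; ring
  simp only [tt]
  rw [cQ, cB, cC, cA, En_eq]
  set QA := qPoch a q k
  set QB := qPoch b q k
  set QC := qPoch c q k
  set Qq := qPoch q q k
  set RB := qPoch (a*q/b) q k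
  set RC := qPoch (a*q/c) q k
  set RA := qPoch (a*q^(k+d+1)) q k
  set En := ∏ j ∈ range k, (q^(k+d) - q^j)
  set Uq := ∏ j ∈ Ico k (k+d), (1 - q*q^j)
  set Ubb := ∏ j ∈ Ico k (k+d), (1 - a*q/b*q^j)
  set Ucc := ∏ j ∈ Ico k (k+d), (1 - a*q/c*q^j)
  set UAA := ∏ j ∈ Ico k (k+d), (1 - a*q^(k+d+1)*q^j)
  have hbk : (b*c) ≠ 0 := mul_ne_zero hb hc
  have hDEN : Qq * RB * RC * RA ≠ 0 :=
    mul_ne_zero (mul_ne_zero (mul_ne_zero hQ hB) hC) hA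
  rw [div_pow, mulDivHelper _ _ _ _ _ _ hDEN (pow_ne_zero k hbk),
    div_eq_iff (mul_ne_zero hDEN (pow_ne_zero k hbk))]
  ring

lemma poch_clear (x e q : ℂ) (hx : x ≠ 0) (n : ℕ) :
    x^n * qPoch (e*q/x) q n = ∏ j ∈ range n, (x - e*q^(j+1)) := by
  have hc1 : x^n = ∏ _j ∈ range n, x := by rw [Finset.prod_const, Finset.card_range]
  rw [qPoch, hc1, ← Finset.prod_mul_distrib]
  refine Finset.prod_congr rfl fun j _ => ?_
  field_simp
  rw [pow_succ]
  ring

lemma cancel_lemma (x f z g w : ℂ) (hw : w ≠ 0) : x/w * f * z * (w*g) = x*f*z*g := by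
  field_simp

/-- The terminating very-well-poised ₆W₅ summation formula. -/
theorem sixW5_terminating (n : ℕ) (q a b c : ℂ) (hq0 : q ≠ 0)
    (hq1 : ∀ m : ℕ, 0 < m → q ^ m ≠ 1) (ha : a ≠ 1) (hb : b ≠ 0) (hc : c ≠ 0)
    (h1 : ∀ j : ℕ, j < n → a * q / b ≠ q ^ (-(j : ℤ)))
    (h2 : ∀ j : ℕ, j < n → a * q / c ≠ q ^ (-(j : ℤ)))
    (h3 : ∀ j : ℕ, j < n → a * q ^ (n + 1) ≠ q ^ (-(j : ℤ)))
    (h4 : ∀ k ≤ n, qPoch q q k ≠ 0 ∧ qPoch (a * q / b) q k ≠ 0 ∧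
          qPoch (a * q / c) q k ≠ 0 ∧ qPoch (a * q ^ (n + 1)) q k ≠ 0) :
    ∑ k ∈ Finset.range (n + 1), (1 - a * q ^ (2 * k)) / (1 - a) *
        (qPoch a q k * qPoch b q k * qPoch c q k * qPoch (q ^ (-(n : ℤ))) q k /
          (qPoch q q k * qPoch (a * q / b) q k * qPoch (a * q / c) q k *
            qPoch (a * q ^ (n + 1)) q k)) * (a * q ^ (n + 1) / (b * c)) ^ k
    = qPoch (a * q) q n * qPoch (a * q / (b * c)) q n /
        (qPoch (a * q / b) q n * qPoch (a * q / c) q n) := by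
  have h1a : (1:ℂ) - a ≠ 0 := sub_ne_zero.mpr (Ne.symm ha)
  obtain ⟨hQn, hBn, hCn, hAn⟩ := h4 n le_rfl
  have hbcn : ((b*c : ℂ))^n ≠ 0 := pow_ne_zero _ (mul_ne_zero hb hc)
  have hBIGne : (1-a) * (qPoch q q n * qPoch (a*q/b) q n * qPoch (a*q/c) q n
      * qPoch (a*q^(n+1)) q n * (b*c)^n) ≠ 0 :=
    mul_ne_zero h1a (mul_ne_zero (mul_ne_zero (mul_ne_zero (mul_ne_zero hQn hBn) hCn) hAn) hbcn)
  apply mul_right_cancel₀ hBIGne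
  rw [Finset.sum_mul]
  have hterm : ∀ k ∈ range (n+1), (1 - a * q ^ (2 * k)) / (1 - a) *
        (qPoch a q k * qPoch b q k * qPoch c q k * qPoch (q ^ (-(n : ℤ))) q k /
          (qPoch q q k * qPoch (a * q / b) q k * qPoch (a * q / c) q k *
            qPoch (a * q ^ (n + 1)) q k)) * (a * q ^ (n + 1) / (b * c)) ^ k
      * ((1-a) * (qPoch q q n * qPoch (a*q/b) q n * qPoch (a*q/c) q n
          * qPoch (a*q^(n+1)) q n * (b*c)^n))
      = tt q a b c n k := by
    intro k hk
    have hkn : k ≤ n := Nat.lt_succ_iff.mp (Finset.mem_range.mp hk)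
    obtain ⟨hQ, hB, hC, hA⟩ := h4 k hkn
    obtain ⟨d, hd⟩ : ∃ d, n = k + d := ⟨n - k, by omega⟩
    subst hd
    rw [cancel_lemma _ _ _ _ _ h1a]
    exact claim q a b c k d hq0 hb hc hQ hB hC hA
  rw [Finset.sum_congr rfl hterm, cleared]
  -- now show RHS * BIG = rrhs
  have cD : (b*c)^n * qPoch (a*q/(b*c)) q n = ∏ j ∈ range n, (b*c - a*q^(j+1)) :=
    poch_clear (b*c) a q (mul_ne_zero hb hc) n
  have cA2 : qPoch (a*q^(n+1)) q n = ∏ j ∈ range n, (1 - a*q^(n+1+j)) := by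
    rw [qPoch]
    exact Finset.prod_congr rfl fun j _ => by rw [pow_add]; ring
  rw [rrhs, ← cD, ← cA2]
  field_simp
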